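/- For each integer n ≥ 2, the kernel G_n(t,s), defined by G_n(t,s) = (1/(2n(1−n²))) e^{n(t−s)} (n + tanh s)(n − tanh t) for t ≤ s and G_n(t,s) = (1/(2n(1−n²))) e^{n(s−t)} (n − tanh s)(n + tanh t) for t ≥ s, is a Green's function for L − n² where L = ∂_t² + 2 sech² t: for any continuous compactly supported f: ℝ → ℝ, the function u(t) = ∫_ℝ G_n(t,s) f(s) ds is C², bounded, and satisfies u'' + 2 sech²(t) u − n² u = f. -/

import Mathlib

/-!
With `φ(t) = e^{-nt}(n + tanh t)` and `ψ(t) = e^{nt}(n - tanh t)`, which solve the homogeneous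
equation `y'' = (n² - 2 sech² t) y` and decay at `+∞` and `-∞` respectively, the kernel is
`G_n(t,s) = c ψ(min t s) φ(max t s)` where `1/c = φ'ψ - ψ'φ = 2n(1 - n²)` is their (constant)
Wronskian. Hence `u(t) = c (φ(t) ∫_{s ≤ t} ψ f + ψ(t) ∫_{s > t} φ f)`, and variation of parameters
gives `u'' = (n² - 2 sech² t) u + f`. Boundedness follows from `|G_n| ≤ |c| (n + 1)²`.
-/

open Real MeasureTheory

/-- The Green's function `G_n(t,s)` for `∂_t² + 2 sech² t − n²`, `n ≥ 2`. -/
noncomputable def greenGn (n : ℤ) (t s : ℝ) : ℝ :=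
  if t ≤ s then
    (1 / (2 * (n : ℝ) * (1 - (n : ℝ) ^ 2))) * Real.exp ((n : ℝ) * (t - s))
      * ((n : ℝ) + Real.tanh s) * ((n : ℝ) - Real.tanh t)
  else
    (1 / (2 * (n : ℝ) * (1 - (n : ℝ) ^ 2))) * Real.exp ((n : ℝ) * (s - t))
      * ((n : ℝ) - Real.tanh s) * ((n : ℝ) + Real.tanh t)

open Set

theorem Real.hasDerivAt_tanh (x : ℝ) : HasDerivAt tanh (1 / cosh x ^ 2) x := by
  have hcosh : cosh x ≠ 0 := (cosh_pos x).ne'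
  rw [show tanh = fun x => sinh x / cosh x from funext tanh_eq_sinh_div_cosh]
  refine ((hasDerivAt_sinh x).div (hasDerivAt_cosh x) hcosh).congr_deriv ?_
  field_simp
  linear_combination cosh_sq_sub_sinh_sq x

theorem Real.hasDerivAt_one_div_cosh_sq (x : ℝ) :
    HasDerivAt (fun x => 1 / cosh x ^ 2) (-2 * tanh x / cosh x ^ 2) x := by
  have hcosh : cosh x ≠ 0 := (cosh_pos x).ne'
  simp only [one_div]
  refine (((hasDerivAt_cosh x).pow 2).inv (pow_ne_zero 2 hcosh)).congr_deriv ?_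
  rw [tanh_eq_sinh_div_cosh]
  field_simp
  simp only [Pi.pow_apply]
  ring

theorem hasDerivAt_integral_Iic {g : ℝ → ℝ} (hg : Continuous g) (hgi : Integrable g) (t : ℝ) :
    HasDerivAt (fun t => ∫ s in Iic t, g s) (g t) t := by
  have h : (fun t => ∫ s in Iic t, g s) = fun t => (∫ s in Iic 0, g s) + ∫ s in 0..t, g s :=
    funext fun t => by
      rw [← intervalIntegral.integral_Iic_sub_Iic hgi.integrableOn hgi.integrableOn]; ring
  rw [h]
  exact ((hg.integral_hasStrictDerivAt 0 t).hasDerivAt).const_add _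

theorem hasDerivAt_integral_Ioi {g : ℝ → ℝ} (hg : Continuous g) (hgi : Integrable g) (t : ℝ) :
    HasDerivAt (fun t => ∫ s in Ioi t, g s) (-g t) t := by
  have h : (fun t => ∫ s in Ioi t, g s) = fun t => (∫ s in Ioi 0, g s) - ∫ s in 0..t, g s :=
    funext fun t => by
      rw [← intervalIntegral.integral_Ioi_sub_Ioi' hgi.integrableOn hgi.integrableOn]; ring
  rw [h]
  exact ((hg.integral_hasStrictDerivAt 0 t).hasDerivAt).const_sub _

structure IsNormalizedFundamentalPair (q φ φ' ψ ψ' : ℝ → ℝ) (c : ℝ) : Prop where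
  hasDerivAt_fst : ∀ t, HasDerivAt φ (φ' t) t
  hasDerivAt_fst_deriv : ∀ t, HasDerivAt φ' (q t * φ t) t
  hasDerivAt_snd : ∀ t, HasDerivAt ψ (ψ' t) t
  hasDerivAt_snd_deriv : ∀ t, HasDerivAt ψ' (q t * ψ t) t
  wronskian : ∀ t, c * (φ' t * ψ t - ψ' t * φ t) = 1

noncomputable def variationOfParameters (φ ψ f : ℝ → ℝ) (c t : ℝ) : ℝ :=
  c * (φ t * (∫ s in Iic t, ψ s * f s) + ψ t * ∫ s in Ioi t, φ s * f s)

namespace IsNormalizedFundamentalPair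

variable {q φ φ' ψ ψ' f : ℝ → ℝ} {c : ℝ}

theorem continuous_fst (h : IsNormalizedFundamentalPair q φ φ' ψ ψ' c) : Continuous φ :=
  continuous_iff_continuousAt.2 fun t => (h.hasDerivAt_fst t).continuousAt

theorem continuous_snd (h : IsNormalizedFundamentalPair q φ φ' ψ ψ' c) : Continuous ψ :=
  continuous_iff_continuousAt.2 fun t => (h.hasDerivAt_snd t).continuousAt

-- The boundary terms `φ ψ f` and `ψ φ f` produced by the product rule cancel.
theorem hasDerivAt_variationOfParameters (h : IsNormalizedFundamentalPair q φ φ' ψ ψ' c)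
    (hf : Continuous f) (hφf : Integrable fun s => φ s * f s)
    (hψf : Integrable fun s => ψ s * f s) (t : ℝ) :
    HasDerivAt (variationOfParameters φ ψ f c)
      (c * (φ' t * (∫ s in Iic t, ψ s * f s) + ψ' t * ∫ s in Ioi t, φ s * f s)) t := by
  have hF : HasDerivAt (fun t => ∫ s in Iic t, ψ s * f s) (ψ t * f t) t :=
    hasDerivAt_integral_Iic (h.continuous_snd.mul hf) hψf t
  have hH : HasDerivAt (fun t => ∫ s in Ioi t, φ s * f s) (-(φ t * f t)) t :=
    hasDerivAt_integral_Ioi (h.continuous_fst.mul hf) hφf t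
  refine ((((h.hasDerivAt_fst t).mul hF).add ((h.hasDerivAt_snd t).mul hH)).const_mul c)
    |>.congr_deriv ?_
  ring

theorem deriv_variationOfParameters (h : IsNormalizedFundamentalPair q φ φ' ψ ψ' c)
    (hf : Continuous f) (hφf : Integrable fun s => φ s * f s)
    (hψf : Integrable fun s => ψ s * f s) :
    deriv (variationOfParameters φ ψ f c) =
      fun t => c * (φ' t * (∫ s in Iic t, ψ s * f s) + ψ' t * ∫ s in Ioi t, φ s * f s) :=
  funext fun t => (h.hasDerivAt_variationOfParameters hf hφf hψf t).deriv

-- Here the boundary terms add up to `c W f = f`.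
theorem hasDerivAt_deriv_variationOfParameters (h : IsNormalizedFundamentalPair q φ φ' ψ ψ' c)
    (hf : Continuous f) (hφf : Integrable fun s => φ s * f s)
    (hψf : Integrable fun s => ψ s * f s) (t : ℝ) :
    HasDerivAt (deriv (variationOfParameters φ ψ f c))
      (q t * variationOfParameters φ ψ f c t + f t) t := by
  rw [h.deriv_variationOfParameters hf hφf hψf]
  have hF : HasDerivAt (fun t => ∫ s in Iic t, ψ s * f s) (ψ t * f t) t :=
    hasDerivAt_integral_Iic (h.continuous_snd.mul hf) hψf t
  have hH : HasDerivAt (fun t => ∫ s in Ioi t, φ s * f s) (-(φ t * f t)) t :=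
    hasDerivAt_integral_Ioi (h.continuous_fst.mul hf) hφf t
  refine ((((h.hasDerivAt_fst_deriv t).mul hF).add
    ((h.hasDerivAt_snd_deriv t).mul hH)).const_mul c).congr_deriv ?_
  unfold variationOfParameters
  linear_combination f t * h.wronskian t

theorem contDiff_variationOfParameters (h : IsNormalizedFundamentalPair q φ φ' ψ ψ' c)
    (hq : Continuous q) (hf : Continuous f) (hφf : Integrable fun s => φ s * f s)
    (hψf : Integrable fun s => ψ s * f s) :
    ContDiff ℝ 2 (variationOfParameters φ ψ f c) := by
  have hU' := h.hasDerivAt_deriv_variationOfParameters hf hφf hψf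
  have hdiff : Differentiable ℝ (variationOfParameters φ ψ f c) := fun t =>
    (h.hasDerivAt_variationOfParameters hf hφf hψf t).differentiableAt
  rw [show (2 : WithTop ℕ∞) = 1 + 1 from rfl, contDiff_succ_iff_deriv]
  refine ⟨hdiff, by simp, contDiff_one_iff_deriv.2 ⟨fun t => (hU' t).differentiableAt, ?_⟩⟩
  rw [funext fun t => (hU' t).deriv]
  exact (hq.mul hdiff.continuous).add hf

end IsNormalizedFundamentalPair

section PoschlTeller

variable (ν : ℝ)

noncomputable def greenPhi (t : ℝ) : ℝ := exp (-ν * t) * (ν + tanh t)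

noncomputable def greenPsi (t : ℝ) : ℝ := exp (ν * t) * (ν - tanh t)

noncomputable def greenPhiDeriv (t : ℝ) : ℝ := exp (-ν * t) * (1 / cosh t ^ 2 - ν * (ν + tanh t))

noncomputable def greenPsiDeriv (t : ℝ) : ℝ := exp (ν * t) * (ν * (ν - tanh t) - 1 / cosh t ^ 2)

noncomputable def poschlTellerCoeff (t : ℝ) : ℝ := ν ^ 2 - 2 * (1 / cosh t) ^ 2

noncomputable def greenConst : ℝ := 1 / (2 * ν * (1 - ν ^ 2))

theorem hasDerivAt_greenPhi (t : ℝ) : HasDerivAt (greenPhi ν) (greenPhiDeriv ν t) t := by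
  refine (((hasDerivAt_id t).const_mul (-ν)).exp.mul
    ((hasDerivAt_tanh t).const_add ν)).congr_deriv ?_
  simp only [greenPhiDeriv, id]
  ring

theorem hasDerivAt_greenPsi (t : ℝ) : HasDerivAt (greenPsi ν) (greenPsiDeriv ν t) t := by
  refine (((hasDerivAt_id t).const_mul ν).exp.mul
    ((hasDerivAt_tanh t).const_sub ν)).congr_deriv ?_
  simp only [greenPsiDeriv, id]
  ring

theorem hasDerivAt_greenPhiDeriv (t : ℝ) :
    HasDerivAt (greenPhiDeriv ν) (poschlTellerCoeff ν t * greenPhi ν t) t := by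
  refine (((hasDerivAt_id t).const_mul (-ν)).exp.mul ((hasDerivAt_one_div_cosh_sq t).sub
    ((hasDerivAt_tanh t).const_add ν |>.const_mul ν))).congr_deriv ?_
  simp only [poschlTellerCoeff, greenPhi, Pi.sub_apply, id]
  ring

theorem hasDerivAt_greenPsiDeriv (t : ℝ) :
    HasDerivAt (greenPsiDeriv ν) (poschlTellerCoeff ν t * greenPsi ν t) t := by
  refine (((hasDerivAt_id t).const_mul ν).exp.mul
    (((hasDerivAt_tanh t).const_sub ν |>.const_mul ν).sub
      (hasDerivAt_one_div_cosh_sq t))).congr_deriv ?_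
  simp only [poschlTellerCoeff, greenPsi, Pi.sub_apply, id]
  ring

-- The Wronskian is `2ν (sech² + tanh² - ν²) = 2ν (1 - ν²)`.
theorem greenPhiDeriv_mul_greenPsi_sub (t : ℝ) :
    greenPhiDeriv ν t * greenPsi ν t - greenPsiDeriv ν t * greenPhi ν t = 2 * ν * (1 - ν ^ 2) := by
  have hexp : exp (-ν * t) * exp (ν * t) = 1 := by rw [← exp_add]; simp
  have hsech : 1 / cosh t ^ 2 + tanh t ^ 2 = 1 := by
    have := cosh_sq_sub_sinh_sq t
    rw [tanh_eq_sinh_div_cosh]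
    field_simp
    linarith
  simp only [greenPhi, greenPsi, greenPhiDeriv, greenPsiDeriv]
  linear_combination (2 * ν * (1 / cosh t ^ 2 + tanh t ^ 2 - ν ^ 2)) * hexp + 2 * ν * hsech

theorem isNormalizedFundamentalPair_green {ν : ℝ} (hν : 2 * ν * (1 - ν ^ 2) ≠ 0) :
    IsNormalizedFundamentalPair (poschlTellerCoeff ν) (greenPhi ν) (greenPhiDeriv ν)
      (greenPsi ν) (greenPsiDeriv ν) (greenConst ν) where
  hasDerivAt_fst := hasDerivAt_greenPhi ν
  hasDerivAt_fst_deriv := hasDerivAt_greenPhiDeriv ν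
  hasDerivAt_snd := hasDerivAt_greenPsi ν
  hasDerivAt_snd_deriv := hasDerivAt_greenPsiDeriv ν
  wronskian t := by rw [greenPhiDeriv_mul_greenPsi_sub, greenConst, one_div_mul_cancel hν]

end PoschlTeller

theorem greenGn_eq_of_ge (n : ℤ) {t s : ℝ} (h : s ≤ t) :
    greenGn n t s = greenConst n * (greenPsi n s * greenPhi n t) := by
  have hexp : exp (n * (s - t)) = exp (n * s) * exp (-n * t) := by rw [← exp_add]; ring_nf
  rcases h.eq_or_lt with rfl | hlt
  · rw [greenGn, if_pos le_rfl, hexp, greenConst, greenPsi, greenPhi]; ring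
  · rw [greenGn, if_neg hlt.not_ge, hexp, greenConst, greenPsi, greenPhi]; ring

theorem greenGn_eq_of_le (n : ℤ) {t s : ℝ} (h : t ≤ s) :
    greenGn n t s = greenConst n * (greenPhi n s * greenPsi n t) := by
  have hexp : exp (n * (t - s)) = exp (n * t) * exp (-n * s) := by rw [← exp_add]; ring_nf
  rw [greenGn, if_pos h, hexp, greenConst, greenPsi, greenPhi]; ring

theorem integral_greenGn_mul (n : ℤ) {f : ℝ → ℝ}
    (hφf : Integrable fun s => greenPhi n s * f s) (hψf : Integrable fun s => greenPsi n s * f s)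
    (t : ℝ) :
    ∫ s, greenGn n t s * f s =
      variationOfParameters (greenPhi n) (greenPsi n) f (greenConst n) t := by
  have hleft : EqOn (fun s => greenGn n t s * f s)
      (fun s => greenConst n * greenPhi n t * (greenPsi n s * f s)) (Iic t) := fun s hs => by
    simp only [greenGn_eq_of_ge n (mem_Iic.1 hs)]; ring
  have hright : EqOn (fun s => greenGn n t s * f s)
      (fun s => greenConst n * greenPsi n t * (greenPhi n s * f s)) (Ioi t) := fun s hs => by
    simp only [greenGn_eq_of_le n (mem_Ioi.1 hs).le]; ring
  rw [← intervalIntegral.integral_Iic_add_Ioi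
      (IntegrableOn.congr_fun (hψf.integrableOn.const_mul _) hleft.symm measurableSet_Iic)
      (IntegrableOn.congr_fun (hφf.integrableOn.const_mul _) hright.symm measurableSet_Ioi),
    setIntegral_congr_fun measurableSet_Iic hleft, setIntegral_congr_fun measurableSet_Ioi hright,
    integral_const_mul, integral_const_mul, variationOfParameters]
  ring

theorem abs_greenPsi_mul_greenPhi_le {ν s t : ℝ} (hν : 0 ≤ ν) (h : s ≤ t) :
    |greenPsi ν s * greenPhi ν t| ≤ (ν + 1) ^ 2 := by
  have hexp : exp (ν * s) * exp (-ν * t) ≤ 1 := by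
    rw [← exp_add, exp_le_one_iff]; nlinarith
  have hs := abs_le.1 (abs_tanh_lt_one s).le
  have ht := abs_le.1 (abs_tanh_lt_one t).le
  have hψ : |ν - tanh s| ≤ ν + 1 := abs_le.2 ⟨by linarith, by linarith⟩
  have hφ : |ν + tanh t| ≤ ν + 1 := abs_le.2 ⟨by linarith, by linarith⟩
  calc |greenPsi ν s * greenPhi ν t|
      = exp (ν * s) * exp (-ν * t) * (|ν - tanh s| * |ν + tanh t|) := by
        simp only [greenPsi, greenPhi, abs_mul, abs_exp]; ring
    _ ≤ 1 * ((ν + 1) * (ν + 1)) := by gcongr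
    _ = (ν + 1) ^ 2 := by ring

theorem abs_greenGn_le {n : ℤ} (hn : 0 ≤ n) (t s : ℝ) :
    |greenGn n t s| ≤ |greenConst n| * (n + 1) ^ 2 := by
  have hn' : (0 : ℝ) ≤ n := by exact_mod_cast hn
  rcases le_total s t with h | h
  · rw [greenGn_eq_of_ge n h, abs_mul]
    exact mul_le_mul_of_nonneg_left (abs_greenPsi_mul_greenPhi_le hn' h) (abs_nonneg _)
  · rw [greenGn_eq_of_le n h, abs_mul, mul_comm (greenPhi n s)]
    exact mul_le_mul_of_nonneg_left (abs_greenPsi_mul_greenPhi_le hn' h) (abs_nonneg _)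

theorem abs_integral_greenGn_mul_le {n : ℤ} (hn : 0 ≤ n) {f : ℝ → ℝ} (hf : Integrable f) (t : ℝ) :
    |∫ s, greenGn n t s * f s| ≤ |greenConst n| * (n + 1) ^ 2 * ∫ s, |f s| := by
  rw [← Real.norm_eq_abs, ← integral_const_mul]
  refine norm_integral_le_of_norm_le (hf.abs.const_mul _) (.of_forall fun s => ?_)
  rw [norm_mul, Real.norm_eq_abs, Real.norm_eq_abs]
  exact mul_le_mul_of_nonneg_right (abs_greenGn_le hn t s) (abs_nonneg _)

/-- For any continuous compactly supported `f`, the function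
`u(t) = ∫ G_n(t,s) f(s) ds` is `C²`, bounded, and solves
`u'' + 2 sech²(t) u − n² u = f`. -/
theorem greenGn_solves (n : ℤ) (hn : 2 ≤ n) (f : ℝ → ℝ)
    (hf : Continuous f) (hsupp : HasCompactSupport f) :
    ContDiff ℝ 2 (fun t => ∫ s, greenGn n t s * f s) ∧
    (∃ M : ℝ, ∀ t : ℝ, |∫ s, greenGn n t s * f s| ≤ M) ∧
    ∀ t : ℝ,
      deriv (deriv (fun t' => ∫ s, greenGn n t' s * f s)) t
        + 2 * (1 / Real.cosh t) ^ 2 * (∫ s, greenGn n t s * f s)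
        - (n : ℝ) ^ 2 * (∫ s, greenGn n t s * f s) = f t := by
  have hn' : (2 : ℝ) ≤ n := by exact_mod_cast hn
  have hpair := isNormalizedFundamentalPair_green (ν := n) (by nlinarith)
  have hφf : Integrable fun s => greenPhi n s * f s :=
    (hpair.continuous_fst.mul hf).integrable_of_hasCompactSupport hsupp.mul_left
  have hψf : Integrable fun s => greenPsi n s * f s :=
    (hpair.continuous_snd.mul hf).integrable_of_hasCompactSupport hsupp.mul_left
  have hu : (fun t => ∫ s, greenGn n t s * f s) =
      variationOfParameters (greenPhi n) (greenPsi n) f (greenConst n) :=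
    funext (integral_greenGn_mul n hφf hψf)
  have hq : Continuous (poschlTellerCoeff n) := by
    unfold poschlTellerCoeff
    fun_prop (disch := exact fun t => (cosh_pos t).ne')
  refine ⟨hu ▸ hpair.contDiff_variationOfParameters hq hf hφf hψf,
    ⟨_, abs_integral_greenGn_mul_le (by omega) (hf.integrable_of_hasCompactSupport hsupp)⟩,
    fun t => ?_⟩
  rw [hu, integral_greenGn_mul n hφf hψf t,
    (hpair.hasDerivAt_deriv_variationOfParameters hf hφf hψf t).deriv, poschlTellerCoeff]
  ring
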